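/- arXiv:1804.02895 — 11 statements merged into one kernel-verified Lean document; each statement's English description precedes it below -/
import Mathlib

section
/- Let V be a finite set with n ≥ 3 elements and let 𝒮 ⊆ 2^V be a family of subsets of V. If 𝒮 is cut-free (i.e., no nonempty proper subset C of V satisfies: every S ∈ 𝒮 neither intersects C crossingly, meaning for all S ∈ 𝒮, not all three of S∩C, C\S, S\C are nonempty), then any consecutive ordering of V to 𝒮 is unique up to reversal. That is, if σ and τ are both linear orderings of V in which every S ∈ 𝒮 occupies a set of consecutive positions, then τ = σ or τ is the reverse of σ. -/
/-- `S` occupies consecutive positions in the ordering `σ`. -/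
def IsIntervalIn {V : Type*} {n : ℕ} (σ : Fin n ≃ V) (S : Set V) : Prop :=
  ∀ i j k : Fin n, i ≤ j → j ≤ k → σ i ∈ S → σ k ∈ S → σ j ∈ S

/-- `σ` is a consecutive ordering of `V` to the family `𝒮`. -/
def ConsecutiveOrd {V : Type*} {n : ℕ} (σ : Fin n ≃ V) (𝒮 : Set (Set V)) : Prop :=
  ∀ S ∈ 𝒮, IsIntervalIn σ S

/-- `S` intersects `C` (crossingly): all of `S∩C`, `C\S`, `S\C` are nonempty. -/
def Crosses {V : Type*} (S C : Set V) : Prop :=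
  (S ∩ C).Nonempty ∧ (C \ S).Nonempty ∧ (S \ C).Nonempty

/-- A nontrivial subset `C` (with `2 ≤ |C| ≤ |V|-1`) is a cut of `𝒮`
if no member of `𝒮` intersects it crossingly. -/
def IsCut {V : Type*} [Fintype V] (𝒮 : Set (Set V)) (C : Set V) : Prop :=
  2 ≤ C.ncard ∧ C.ncard ≤ Fintype.card V - 1 ∧ ∀ S ∈ 𝒮, ¬ Crosses S C

def CutFree {V : Type*} [Fintype V] (𝒮 : Set (Set V)) : Prop :=
  ¬ ∃ C : Set V, IsCut 𝒮 C

/-!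
Call `U ⊆ V` good if `τ ⁻¹' U` is an initial segment of `Fin n` and `σ ⁻¹' U` an interval.
If `A ⊂ B` are good, `A ≠ ∅` and `|B \ A| ≥ 2`, a member `S` of the family crossing `B \ A`
either meets `A` or leaves `B`, and then `A ∪ S` or `B \ S` is good and lies strictly between
`A` and `B`. Growing initial segments of `τ` one element at a time, this shows that every initial
segment of `τ` is an interval of `σ`. For the reverse of `τ` it says that `V \ {τ 0}` is a
`σ`-interval, so `τ 0` is an end of `σ`; reversing `σ` if necessary, `τ 0 = σ 0`, the initial
segments of `τ` become initial segments of `σ`, and `τ⁻¹ ∘ σ` is monotone, hence the identity.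
-/

open Set

section LinearOrder

variable {α : Type*} [LinearOrder α] {s t : Set α}

theorem IsLowerSet.subset_of_mem_of_notMem (hs : IsLowerSet s) (ht : IsLowerSet t) {a : α}
    (hat : a ∈ t) (has : a ∉ s) : s ⊆ t := fun x hx =>
  (le_total x a).elim (fun hxa => ht hxa hat) fun hax => absurd (hs hax hx) has

theorem IsLowerSet.union_of_ordConnected (hs : IsLowerSet s) (ht : t.OrdConnected)
    (hst : (s ∩ t).Nonempty) : IsLowerSet (s ∪ t) := by
  obtain ⟨c, hcs, hct⟩ := hst
  rintro a b hba (has | hat)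
  · exact Or.inl (hs hba has)
  · rcases le_total b c with hbc | hcb
    · exact Or.inl (hs hbc hcs)
    · exact Or.inr (ht.out hct hat ⟨hcb, hba⟩)

theorem IsLowerSet.sdiff_of_ordConnected (hs : IsLowerSet s) (ht : t.OrdConnected)
    (hts : (t \ s).Nonempty) : IsLowerSet (s \ t) := by
  obtain ⟨c, hct, hcs⟩ := hts
  rintro a b hba ⟨has, hat⟩
  have hac : a ≤ c := (le_total a c).resolve_right fun hca => hcs (hs hca has)
  exact ⟨hs hba has, fun hbt => hat (ht.out hbt hct ⟨hba, hac⟩)⟩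

theorem Set.OrdConnected.union_of_inter_nonempty (hs : s.OrdConnected) (ht : t.OrdConnected)
    (hst : (s ∩ t).Nonempty) : (s ∪ t).OrdConnected := by
  obtain ⟨c, hcs, hct⟩ := hst
  refine ⟨fun x hx y hy z ⟨hxz, hzy⟩ => ?_⟩
  rcases le_total z c with hzc | hcz
  · rcases hx with hx | hx
    exacts [Or.inl (hs.out hx hcs ⟨hxz, hzc⟩), Or.inr (ht.out hx hct ⟨hxz, hzc⟩)]
  · rcases hy with hy | hy
    exacts [Or.inl (hs.out hcs hy ⟨hcz, hzy⟩), Or.inr (ht.out hct hy ⟨hcz, hzy⟩)]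

theorem Set.OrdConnected.sdiff_of_sdiff_nonempty (hs : s.OrdConnected) (ht : t.OrdConnected)
    (hts : (t \ s).Nonempty) : (s \ t).OrdConnected := by
  obtain ⟨c, hct, hcs⟩ := hts
  refine ⟨fun x ⟨hxs, hxt⟩ y ⟨hys, hyt⟩ z hz => ⟨hs.out hxs hys hz, fun hzt => ?_⟩⟩
  rcases le_total c x with hcx | hxc
  · exact hxt (ht.out hct hzt ⟨hcx, hz.1⟩)
  rcases le_total c y with hcy | hyc
  · exact hcs (hs.out hxs hys ⟨hxc, hcy⟩)
  · exact hyt (ht.out hzt hct ⟨hz.2, hyc⟩)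

end LinearOrder

theorem Set.Subsingleton.ordConnected {α : Type*} [PartialOrder α] {s : Set α}
    (hs : s.Subsingleton) : s.OrdConnected :=
  ⟨fun x hx y hy z hz => by
    obtain rfl := hs hx hy
    rwa [le_antisymm hz.2 hz.1]⟩

theorem Set.OrdConnected.isLowerSet_of_bot_mem {α : Type*} [Preorder α] [OrderBot α]
    {s : Set α} (hs : s.OrdConnected) (hbot : ⊥ ∈ s) : IsLowerSet s :=
  fun _ _ hba ha => hs.out hbot ha ⟨bot_le, hba⟩

theorem eq_bot_or_eq_top_of_ordConnected_compl_singleton {α : Type*} [Preorder α]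
    [BoundedOrder α] {z : α} (hz : ({z}ᶜ : Set α).OrdConnected) : z = ⊥ ∨ z = ⊤ := by
  by_contra! h
  exact hz.out (Ne.symm h.1) (Ne.symm h.2) ⟨bot_le, le_top⟩ rfl

theorem Fin.equiv_apply_eq_self_of_monotone {n : ℕ} (e : Fin n ≃ Fin n) (he : Monotone e)
    (i : Fin n) : e i = i :=
  Fin.ext (Fin.coe_orderIso_apply
    (StrictMono.orderIsoOfSurjective e (he.strictMono_of_injective e.injective) e.surjective) i)

section Orderings

variable {V : Type*} {n : ℕ} {𝒮 : Set (Set V)} {σ τ : Fin n ≃ V}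

theorem ConsecutiveOrd.ordConnected (h : ConsecutiveOrd σ 𝒮) {S : Set V} (hS : S ∈ 𝒮) :
    (σ ⁻¹' S).OrdConnected :=
  ⟨fun _ hi _ hk _ hj => h S hS _ _ _ hj.1 hj.2 hi hk⟩

theorem ConsecutiveOrd.revPerm (h : ConsecutiveOrd σ 𝒮) :
    ConsecutiveOrd (Fin.revPerm.trans σ) 𝒮 :=
  fun S hS i j k hij hjk hi hk =>
    h S hS k.rev j.rev i.rev (Fin.rev_le_rev.2 hjk) (Fin.rev_le_rev.2 hij) hk hi

theorem Equiv.subset_of_isLowerSet_preimage {U B : Set V} (hU : IsLowerSet (τ ⁻¹' U))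
    (hB : IsLowerSet (τ ⁻¹' B)) {y : V} (hyB : y ∈ B) (hyU : y ∉ U) : U ⊆ B := by
  rw [← τ.surjective.preimage_subset_preimage_iff]
  exact hU.subset_of_mem_of_notMem hB (a := τ.symm y) (by simpa) (by simpa)

theorem CutFree.exists_crosses [Fintype V] (h : CutFree 𝒮) {C : Set V} (hC : 2 ≤ C.ncard)
    (hC' : C.ncard ≤ Fintype.card V - 1) : ∃ S ∈ 𝒮, Crosses S C := by
  by_contra! hcross
  exact h ⟨C, hC, hC', hcross⟩

end Orderings

section CutFree

variable {V : Type*} [Fintype V] {n : ℕ} {𝒮 : Set (Set V)} {σ τ : Fin n ≃ V}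

theorem CutFree.exists_ssubset_ssubset (hcf : CutFree 𝒮) (hσ : ConsecutiveOrd σ 𝒮)
    (hτ : ConsecutiveOrd τ 𝒮) {A B : Set V}
    (hAτ : IsLowerSet (τ ⁻¹' A)) (hAσ : (σ ⁻¹' A).OrdConnected)
    (hBτ : IsLowerSet (τ ⁻¹' B)) (hBσ : (σ ⁻¹' B).OrdConnected)
    (hA : A.Nonempty) (hBA : 2 ≤ (B \ A).ncard) :
    ∃ U, (IsLowerSet (τ ⁻¹' U) ∧ (σ ⁻¹' U).OrdConnected) ∧ A ⊂ U ∧ U ⊂ B := by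
  have hBA' : (B \ A).ncard ≤ Fintype.card V - 1 := by
    obtain ⟨a, ha⟩ := hA
    have := ncard_lt_ncard <|
      ssubset_univ_iff.2 fun h => (eq_univ_iff_forall.1 h a : a ∈ B \ A).2 ha
    rw [ncard_univ, Nat.card_eq_fintype_card] at this
    omega
  obtain ⟨S, hS, ⟨x, hxS, hxB, hxA⟩, ⟨y, ⟨hyB, hyA⟩, hyS⟩, ⟨w, hwS, hwBA⟩⟩ :=
    hcf.exists_crosses hBA hBA'
  have hSτ := hτ.ordConnected hS
  have hSσ := hσ.ordConnected hS
  by_cases hwA : w ∈ A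
  · have hUτ : IsLowerSet (τ ⁻¹' (A ∪ S)) := by
      rw [preimage_union]
      exact hAτ.union_of_ordConnected hSτ ⟨τ.symm w, by simp [hwA, hwS]⟩
    have hUσ : (σ ⁻¹' (A ∪ S)).OrdConnected := by
      rw [preimage_union]
      exact hAσ.union_of_inter_nonempty hSσ ⟨σ.symm w, by simp [hwA, hwS]⟩
    refine ⟨A ∪ S, ⟨hUτ, hUσ⟩,
      ssubset_of_subset_not_subset subset_union_left fun h => hxA (h (Or.inr hxS)), ?_⟩
    exact ssubset_of_subset_not_subset (τ.subset_of_isLowerSet_preimage hUτ hBτ hyB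
      fun h => h.elim hyA hyS) fun h => (h hyB).elim hyA hyS
  · have hwB : w ∉ B := fun h => hwBA ⟨h, hwA⟩
    have hUτ : IsLowerSet (τ ⁻¹' (B \ S)) := by
      rw [preimage_sdiff]
      exact hBτ.sdiff_of_ordConnected hSτ ⟨τ.symm w, by simp [hwS, hwB]⟩
    have hUσ : (σ ⁻¹' (B \ S)).OrdConnected := by
      rw [preimage_sdiff]
      exact hBσ.sdiff_of_sdiff_nonempty hSσ ⟨σ.symm w, by simp [hwS, hwB]⟩
    refine ⟨B \ S, ⟨hUτ, hUσ⟩, ?_,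
      ssubset_of_subset_not_subset sdiff_subset fun h => (h hxB).2 hxS⟩
    exact ssubset_of_subset_not_subset (τ.subset_of_isLowerSet_preimage hAτ hUτ ⟨hyB, hyS⟩ hyA)
      fun h => hyA (h ⟨hyB, hyS⟩)

theorem CutFree.ordConnected_preimage_of_isLowerSet (hcf : CutFree 𝒮) (hσ : ConsecutiveOrd σ 𝒮)
    (hτ : ConsecutiveOrd τ 𝒮) (U : Set V) (hU : IsLowerSet (τ ⁻¹' U)) :
    (σ ⁻¹' U).OrdConnected := by
  induction hk : U.ncard using Nat.strong_induction_on generalizing U with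
  | _ k ih =>
  rcases U.subsingleton_or_nontrivial with hsub | hnt
  · exact (hsub.preimage σ.injective).ordConnected
  obtain ⟨u, huU, hmax⟩ := exists_max_image U τ.symm U.toFinite hnt.nonempty
  set A := U \ {u} with hAdef
  have hAτ : IsLowerSet (τ ⁻¹' A) := by
    rintro i j hji ⟨hiU, hiu⟩
    refine ⟨hU hji hiU, fun hju => hiu ?_⟩
    have hij : i ≤ j := by simpa [← show τ j = u from hju] using hmax _ hiU
    rwa [le_antisymm hij hji]
  have hAσ : (σ ⁻¹' A).OrdConnected :=
    ih _ (hk ▸ ncard_sdiff_singleton_lt_of_mem huU) A hAτ rfl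
  obtain ⟨B, hB⟩ := exists_minimal_of_wellFoundedLT
    (fun B => (IsLowerSet (τ ⁻¹' B) ∧ (σ ⁻¹' B).OrdConnected) ∧ A ⊂ B)
    ⟨univ, ⟨isLowerSet_univ, ordConnected_univ⟩,
      ssubset_univ_iff.2 fun h => (h ▸ mem_univ u : u ∈ A).2 rfl⟩
  obtain ⟨⟨⟨hBτ, hBσ⟩, hAB⟩, hBmin⟩ := hB
  have huB : u ∈ B := by
    by_contra huB
    obtain ⟨b, hbB, hbA⟩ := exists_of_ssubset hAB
    have hbU := τ.subset_of_isLowerSet_preimage hBτ hU huU huB hbB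
    obtain rfl : b = u := by simpa [hAdef, hbU] using hbA
    exact huB hbB
  have hBU : B ⊆ U := by
    intro b hbB
    by_contra hbU
    have hBA : 2 ≤ (B \ A).ncard := by
      have hub : u ≠ b := fun h => hbU (h ▸ huU)
      rw [← ncard_pair hub]
      exact ncard_le_ncard (pair_subset ⟨huB, fun h => h.2 rfl⟩ ⟨hbB, fun h => hbU h.1⟩)
    obtain ⟨W, hW, hAW, hWB⟩ :=
      hcf.exists_ssubset_ssubset hσ hτ hAτ hAσ hBτ hBσ (hnt.exists_ne u) hBA
    exact hWB.2 (hBmin ⟨hW, hAW⟩ hWB.1)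
  have hUB : U = B := hBU.antisymm' fun v hv =>
    (eq_or_ne v u).elim (fun hvu => hvu ▸ huB) fun hvu => hAB.1 ⟨hv, hvu⟩
  exact hUB ▸ hBσ

theorem CutFree.symm_apply_zero_eq_bot_or_eq_top [NeZero n] (hcf : CutFree 𝒮)
    (hσ : ConsecutiveOrd σ 𝒮) (hτ : ConsecutiveOrd τ 𝒮) :
    σ.symm (τ 0) = ⊥ ∨ σ.symm (τ 0) = ⊤ := by
  apply eq_bot_or_eq_top_of_ordConnected_compl_singleton
  have hlow : IsLowerSet ((Fin.revPerm.trans τ) ⁻¹' {τ 0}ᶜ) := by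
    intro i j hji hi hj
    simp only [mem_preimage, mem_compl_iff, mem_singleton_iff, Equiv.trans_apply,
      Fin.revPerm_apply, EmbeddingLike.apply_eq_iff_eq] at hi hj
    exact hi (le_antisymm (hj ▸ Fin.rev_le_rev.2 hji) (Fin.zero_le _))
  have hpre : σ ⁻¹' {τ 0}ᶜ = {σ.symm (τ 0)}ᶜ := by
    ext i
    simp [Equiv.eq_symm_apply]
  simpa [hpre] using hcf.ordConnected_preimage_of_isLowerSet hσ hτ.revPerm _ hlow

end CutFree

theorem Equiv.apply_eq_of_ordConnected_preimage {V : Type*} {n : ℕ} [NeZero n] {σ τ : Fin n ≃ V}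
    (h : ∀ U, IsLowerSet (τ ⁻¹' U) → (σ ⁻¹' U).OrdConnected) (h0 : τ 0 = σ 0) (k : Fin n) :
    τ k = σ k := by
  have hmono : Monotone (σ.trans τ.symm) := by
    intro a b hab
    have hlow : IsLowerSet (σ ⁻¹' {v | τ.symm v ≤ τ.symm (σ b)}) := by
      refine (h _ fun i j hji hi => ?_).isLowerSet_of_bot_mem ?_
      · simpa using hji.trans (by simpa using hi)
      · simp [show σ ⊥ = τ 0 from h0.symm]
    simpa using hlow hab (le_refl (τ.symm (σ b)))
  exact (τ.symm_apply_eq.1 (Fin.equiv_apply_eq_self_of_monotone _ hmono k)).symm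

theorem consecutive_ordering_unique_up_to_reversal_general
    {V : Type*} [Fintype V] {n : ℕ}
    (𝒮 : Set (Set V)) (hcf : CutFree 𝒮)
    (σ τ : Fin n ≃ V)
    (hσ : ConsecutiveOrd σ 𝒮) (hτ : ConsecutiveOrd τ 𝒮) :
    (∀ k : Fin n, τ k = σ k) ∨ (∀ k : Fin n, τ k = σ k.rev) := by
  rcases n.eq_zero_or_pos with rfl | hpos
  · exact Or.inl fun k => k.elim0
  have : NeZero n := ⟨hpos.ne'⟩
  rcases hcf.symm_apply_zero_eq_bot_or_eq_top hσ hτ with h | h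
  · exact Or.inl (Equiv.apply_eq_of_ordConnected_preimage
      (hcf.ordConnected_preimage_of_isLowerSet hσ hτ) (σ.symm_apply_eq.1 h))
  · exact Or.inr (Equiv.apply_eq_of_ordConnected_preimage
      (hcf.ordConnected_preimage_of_isLowerSet hσ.revPerm hτ) (σ.symm_apply_eq.1 h))

/-- A consecutive ordering of `V` to a cut-free family is unique up to reversal. -/
theorem consecutive_ordering_unique_up_to_reversal
    {V : Type*} [Fintype V] [DecidableEq V] {n : ℕ}
    (hn : n = Fintype.card V) (h3 : 3 ≤ n)
    (𝒮 : Set (Set V)) (hcf : CutFree 𝒮)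
    (σ τ : Fin n ≃ V)
    (hσ : ConsecutiveOrd σ 𝒮) (hτ : ConsecutiveOrd τ 𝒮) :
    (∀ k : Fin n, τ k = σ k) ∨ (∀ k : Fin n, τ k = σ k.rev) :=
  consecutive_ordering_unique_up_to_reversal_general 𝒮 hcf σ τ hσ hτ
end

section
/- Let 𝒮 ⊆ 2^V admit a contiguous ordering of V. If some maximal set B ∈ 𝒮 contains at least three distinct minimal sets A_1, A_2, A_3 ∈ 𝒮 as proper subsets, then a contradiction follows; i.e., if a maximal set of 𝒮 contains three distinct minimal sets of 𝒮, then 𝒮 admits no contiguous ordering of V. -/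
/-- `σ` is a contiguous ordering of `V` to `𝒮`: every member is consecutive, and
whenever `S ⊆ S'` (both members), `S` contains the first or last element of `S'`. -/
def ContiguousOrd {V : Type*} {n : ℕ} (σ : Fin n ≃ V) (𝒮 : Set (Set V)) : Prop :=
  (∀ S ∈ 𝒮, IsIntervalIn σ S) ∧
  ∀ S ∈ 𝒮, ∀ S' ∈ 𝒮, S ⊆ S' →
    ∀ i j : Fin n, σ i ∈ S' → σ j ∈ S' → (∀ k : Fin n, σ k ∈ S' → i ≤ k ∧ k ≤ j) →
      (σ i ∈ S ∨ σ j ∈ S)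

/-- `A` is a minimal member of `𝒮`. -/
def MinimalIn {V : Type*} (𝒮 : Set (Set V)) (A : Set V) : Prop :=
  A ∈ 𝒮 ∧ ∀ A' ∈ 𝒮, A' ⊆ A → A' = A

/-- `B` is a maximal member of `𝒮`. -/
def MaximalIn {V : Type*} (𝒮 : Set (Set V)) (B : Set V) : Prop :=
  B ∈ 𝒮 ∧ ∀ B' ∈ 𝒮, B ⊆ B' → B' = B

/-!
Let `i` and `j` be the first and last positions of `B`. By contiguity every member of `𝒮`
inside `B` contains `σ i` or `σ j`, so two of the three minimal sets share an end of `B`.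
Two intervals starting (or ending) at the same position are nested, and nested minimal
sets are equal.
-/

namespace Set.OrdConnected

variable {α : Type*} [LinearOrder α] {s t : Set α} {a : α}

theorem subset_or_subset_of_isLeast (hs : s.OrdConnected) (ht : t.OrdConnected)
    (has : IsLeast s a) (hat : IsLeast t a) : s ⊆ t ∨ t ⊆ s := by
  by_contra! h
  obtain ⟨x, hxs, hxt⟩ := Set.not_subset.1 h.1
  obtain ⟨y, hyt, hys⟩ := Set.not_subset.1 h.2
  rcases le_total x y with hxy | hyx
  · exact hxt (ht.out hat.1 hyt ⟨has.2 hxs, hxy⟩)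
  · exact hys (hs.out has.1 hxs ⟨hat.2 hyt, hyx⟩)

theorem subset_or_subset_of_isGreatest (hs : s.OrdConnected) (ht : t.OrdConnected)
    (has : IsGreatest s a) (hat : IsGreatest t a) : s ⊆ t ∨ t ⊆ s :=
  subset_or_subset_of_isLeast (α := αᵒᵈ) hs.dual ht.dual has hat

end Set.OrdConnected

section

variable {V : Type*} {n : ℕ} {σ : Fin n ≃ V} {𝒮 : Set (Set V)} {A A' B : Set V}

theorem IsIntervalIn.ordConnected (h : IsIntervalIn σ A) : (σ ⁻¹' A).OrdConnected :=
  ⟨fun _ hi _ hk _ hj => h _ _ _ hj.1 hj.2 hi hk⟩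

theorem MinimalIn.eq_of_subset_or_subset (hA : MinimalIn 𝒮 A) (hA' : MinimalIn 𝒮 A')
    (h : A ⊆ A' ∨ A' ⊆ A) : A = A' :=
  h.elim (hA'.2 A hA.1) fun h => (hA.2 A' hA'.1 h).symm

theorem ContiguousOrd.mem_or_mem_of_isLeast_of_isGreatest (hσ : ContiguousOrd σ 𝒮)
    (hA : A ∈ 𝒮) (hB : B ∈ 𝒮) (hAB : A ⊆ B) {i j : Fin n}
    (hi : IsLeast (σ ⁻¹' B) i) (hj : IsGreatest (σ ⁻¹' B) j) : σ i ∈ A ∨ σ j ∈ A :=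
  hσ.2 A hA B hB hAB i j hi.1 hj.1 fun _ hk => ⟨hi.2 hk, hj.2 hk⟩

theorem MinimalIn.eq_of_mem_common_end (hA : MinimalIn 𝒮 A) (hA' : MinimalIn 𝒮 A')
    (hI : IsIntervalIn σ A) (hI' : IsIntervalIn σ A') (hAB : A ⊆ B) (hA'B : A' ⊆ B) {p : Fin n}
    (hp : IsLeast (σ ⁻¹' B) p ∨ IsGreatest (σ ⁻¹' B) p) (h : σ p ∈ A) (h' : σ p ∈ A') :
    A = A' := by
  refine hA.eq_of_subset_or_subset hA' ?_
  rw [← σ.preimage_subset, ← σ.preimage_subset]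
  rcases hp with hp | hp
  · exact hI.ordConnected.subset_or_subset_of_isLeast hI'.ordConnected
      ⟨h, lowerBounds_mono_set (Set.preimage_mono hAB) hp.2⟩
      ⟨h', lowerBounds_mono_set (Set.preimage_mono hA'B) hp.2⟩
  · exact hI.ordConnected.subset_or_subset_of_isGreatest hI'.ordConnected
      ⟨h, upperBounds_mono_set (Set.preimage_mono hAB) hp.2⟩
      ⟨h', upperBounds_mono_set (Set.preimage_mono hA'B) hp.2⟩

end

theorem no_contiguous_ordering_of_three_minimal_in_maximal_general
    {V : Type*} {n : ℕ}
    (𝒮 : Set (Set V))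
    (B : Set V) (hB : MaximalIn 𝒮 B)
    (A₁ A₂ A₃ : Set V)
    (h1 : MinimalIn 𝒮 A₁) (h2 : MinimalIn 𝒮 A₂) (h3 : MinimalIn 𝒮 A₃)
    (h12 : A₁ ≠ A₂) (h13 : A₁ ≠ A₃) (h23 : A₂ ≠ A₃)
    (hs1 : A₁ ⊂ B) (hs2 : A₂ ⊂ B) (hs3 : A₃ ⊂ B)
    (σ : Fin n ≃ V) (hσ : ContiguousOrd σ 𝒮) :
    False := by
  obtain ⟨v, hvB, -⟩ := Set.exists_of_ssubset hs1
  have hBne : (σ ⁻¹' B).Nonempty := ⟨σ.symm v, by simpa using hvB⟩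
  obtain ⟨i, hiB, hi⟩ := Set.exists_min_image _ id (Set.toFinite _) hBne
  obtain ⟨j, hjB, hj⟩ := Set.exists_max_image _ id (Set.toFinite _) hBne
  have ends {A : Set V} (hA : MinimalIn 𝒮 A) (hAB : A ⊂ B) : σ i ∈ A ∨ σ j ∈ A :=
    hσ.mem_or_mem_of_isLeast_of_isGreatest hA.1 hB.1 hAB.subset ⟨hiB, hi⟩ ⟨hjB, hj⟩
  have same {A A' : Set V} {p : Fin n} (hA : MinimalIn 𝒮 A) (hA' : MinimalIn 𝒮 A')
      (hAB : A ⊂ B) (hA'B : A' ⊂ B) (hp : p = i ∨ p = j) : σ p ∈ A → σ p ∈ A' → A = A' :=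
    hA.eq_of_mem_common_end hA' (hσ.1 A hA.1) (hσ.1 A' hA'.1) hAB.subset hA'B.subset <|
      hp.elim (fun hp => .inl (hp ▸ ⟨hiB, hi⟩)) fun hp => .inr (hp ▸ ⟨hjB, hj⟩)
  rcases ends h1 hs1 with e1 | e1 <;> rcases ends h2 hs2 with e2 | e2 <;>
    rcases ends h3 hs3 with e3 | e3 <;>
    first
    | exact h12 (same h1 h2 hs1 hs2 (by simp) e1 e2)
    | exact h13 (same h1 h3 hs1 hs3 (by simp) e1 e3)
    | exact h23 (same h2 h3 hs2 hs3 (by simp) e2 e3)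

/-- If a maximal set of `𝒮` contains three distinct minimal sets of `𝒮` as proper
subsets, then `𝒮` admits no contiguous ordering of `V`. -/
theorem no_contiguous_ordering_of_three_minimal_in_maximal
    {V : Type*} [Fintype V] {n : ℕ} (hn : n = Fintype.card V)
    (𝒮 : Set (Set V)) (hne : ∅ ∉ 𝒮)
    (B : Set V) (hB : MaximalIn 𝒮 B)
    (A₁ A₂ A₃ : Set V)
    (h1 : MinimalIn 𝒮 A₁) (h2 : MinimalIn 𝒮 A₂) (h3 : MinimalIn 𝒮 A₃)
    (h12 : A₁ ≠ A₂) (h13 : A₁ ≠ A₃) (h23 : A₂ ≠ A₃)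
    (hs1 : A₁ ⊂ B) (hs2 : A₂ ⊂ B) (hs3 : A₃ ⊂ B)
    (σ : Fin n ≃ V) (hσ : ContiguousOrd σ 𝒮) :
    False :=
  no_contiguous_ordering_of_three_minimal_in_maximal_general 𝒮 B hB A₁ A₂ A₃ h1 h2 h3 h12 h13 h23
    hs1 hs2 hs3 σ hσ
end

section
/- Let 𝒮 ⊆ 2^V be separator-free, let σ be a contiguous ordering of V to 𝒮, and let X ⊆ V be a maximal set of elements that are pairwise equivalent (u, v are equivalent if every S ∈ 𝒮 contains both or neither). Then the elements of X appear consecutively in σ. -/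
/-- `C` is a separator of `𝒮`: a nonempty proper subset of `V` such that every member
of `𝒮` is a subset of `C` or disjoint from `C`. -/
def IsSeparator {V : Type*} (𝒮 : Set (Set V)) (C : Set V) : Prop :=
  C.Nonempty ∧ C ≠ Set.univ ∧ ∀ S ∈ 𝒮, S ⊆ C ∨ Disjoint S C

def SeparatorFree {V : Type*} (𝒮 : Set (Set V)) : Prop :=
  ¬ ∃ C : Set V, IsSeparator 𝒮 C

/-- `u` and `v` are equivalent for `𝒮`: every member contains both or neither. -/
def EquivElem {V : Type*} (𝒮 : Set (Set V)) (u v : V) : Prop :=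
  ∀ S ∈ 𝒮, (u ∈ S ↔ v ∈ S)

/-!
Let `i < j < k` with `σ i, σ k ∈ X`. If some `S ∈ 𝒮` separated `σ j` from `σ i`, then `S`, being
an interval avoiding the equivalent elements `σ i` and `σ k`, would lie strictly between
positions `i` and `k`. The union `C` of all members of `𝒮` lying strictly between `i` and `k` is
then a separator: a member `T` meeting `C` but not contained in it reaches past `i` or `k`, hence
contains `σ i` and `σ k`, hence contains some `S' ⊆ C`; but contiguity forces `S'` to contain an
end of `T`, which lies outside `(i, k)`. So `σ j` is equivalent to `σ i`, and maximality of `X`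
puts it in `X`.
-/

section EquivElem

variable {V : Type*} {𝒮 : Set (Set V)} {u v w : V}

theorem EquivElem.symm (h : EquivElem 𝒮 u v) : EquivElem 𝒮 v u :=
  fun S hS => (h S hS).symm

theorem EquivElem.trans (huv : EquivElem 𝒮 u v) (hvw : EquivElem 𝒮 v w) : EquivElem 𝒮 u w :=
  fun S hS => (huv S hS).trans (hvw S hS)

theorem mem_of_equivElem_of_maximal {X : Set V}
    (hXeq : ∀ u ∈ X, ∀ v ∈ X, EquivElem 𝒮 u v)
    (hXmax : ∀ Y : Set V, X ⊆ Y → (∀ u ∈ Y, ∀ v ∈ Y, EquivElem 𝒮 u v) → Y = X)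
    (hu : u ∈ X) (hvu : EquivElem 𝒮 v u) : v ∈ X := by
  have hvX : ∀ x ∈ X, EquivElem 𝒮 v x := fun x hx => hvu.trans (hXeq u hu x hx)
  have hY : insert v X = X := by
    refine hXmax _ (Set.subset_insert _ _) ?_
    rintro a (rfl | ha) b (rfl | hb)
    · exact fun _ _ => Iff.rfl
    · exact hvX b hb
    · exact (hvX a ha).symm
    · exact hXeq a ha b hb
  exact hY ▸ Set.mem_insert v X

end EquivElem

section Ordering

variable {V : Type*} {n : ℕ} (σ : Fin n ≃ V)

def StrictlyBetween (i k : Fin n) (S : Set V) : Prop :=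
  ∀ w ∈ S, i < σ.symm w ∧ σ.symm w < k

variable {σ}

theorem exists_first_last_of_nonempty {T : Set V} (hT : T.Nonempty) :
    ∃ a b : Fin n, σ a ∈ T ∧ σ b ∈ T ∧ ∀ q : Fin n, σ q ∈ T → a ≤ q ∧ q ≤ b := by
  have hne : (σ ⁻¹' T).Nonempty := by
    obtain ⟨v, hv⟩ := hT
    exact ⟨σ.symm v, by simpa using hv⟩
  obtain ⟨a, ha, hmin⟩ := Set.exists_min_image _ id (Set.toFinite _) hne
  obtain ⟨b, hb, hmax⟩ := Set.exists_max_image _ id (Set.toFinite _) hne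
  exact ⟨a, b, ha, hb, fun q hq => ⟨hmin q hq, hmax q hq⟩⟩

theorem IsIntervalIn.strictlyBetween {S : Set V} (hS : IsIntervalIn σ S) {i j k : Fin n}
    (hij : i ≤ j) (hjk : j ≤ k) (hj : σ j ∈ S) (hi : σ i ∉ S) (hk : σ k ∉ S) :
    StrictlyBetween σ i k S := by
  intro w hw
  have hw' : σ (σ.symm w) ∈ S := by simpa using hw
  constructor
  · by_contra! h
    exact hi (hS _ _ _ h hij hw' hj)
  · by_contra! h
    exact hk (hS _ _ _ hjk h hj hw')

theorem IsIntervalIn.mem_or_mem_of_strictlyBetween {T : Set V} (hT : IsIntervalIn σ T)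
    {i k : Fin n} {v w : V} (hvT : v ∈ T) (hv : i < σ.symm v ∧ σ.symm v < k)
    (hwT : w ∈ T) (hw : ¬(i < σ.symm w ∧ σ.symm w < k)) : σ i ∈ T ∨ σ k ∈ T := by
  have hvT' : σ (σ.symm v) ∈ T := by simpa using hvT
  have hwT' : σ (σ.symm w) ∈ T := by simpa using hwT
  by_cases hwi : σ.symm w ≤ i
  · exact Or.inl (hT _ _ _ hwi hv.1.le hwT' hvT')
  · exact Or.inr (hT _ _ _ hv.2.le (not_lt.mp fun h => hw ⟨not_le.mp hwi, h⟩) hvT' hwT')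

theorem StrictlyBetween.subset_of_isIntervalIn {S T : Set V} {i k : Fin n}
    (hS : StrictlyBetween σ i k S) (hT : IsIntervalIn σ T) (hi : σ i ∈ T) (hk : σ k ∈ T) :
    S ⊆ T := fun w hw => by
  simpa using hT _ _ _ (hS w hw).1.le (hS w hw).2.le hi hk

variable {𝒮 : Set (Set V)}

theorem ContiguousOrd.not_strictlyBetween_of_subset (hσ : ContiguousOrd σ 𝒮)
    {S T : Set V} (hS : S ∈ 𝒮) (hT : T ∈ 𝒮) (hST : S ⊆ T) {i k : Fin n}
    (hi : σ i ∈ T) (hk : σ k ∈ T) : ¬StrictlyBetween σ i k S := by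
  intro hSb
  obtain ⟨a, b, ha, hb, hab⟩ := exists_first_last_of_nonempty ⟨_, hi⟩
  rcases hσ.2 S hS T hT hST a b ha hb hab with haS | hbS
  · exact (hSb _ haS).1.not_ge (by simpa using (hab i hi).1)
  · exact (hSb _ hbS).2.not_ge (by simpa using (hab k hk).2)

theorem ContiguousOrd.isSeparator_sUnion_strictlyBetween (hσ : ContiguousOrd σ 𝒮)
    {i k : Fin n} (hik : EquivElem 𝒮 (σ i) (σ k)) {S : Set V} (hS : S ∈ 𝒮)
    (hSb : StrictlyBetween σ i k S) (hSne : S.Nonempty) :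
    IsSeparator 𝒮 (⋃₀ {S ∈ 𝒮 | StrictlyBetween σ i k S}) := by
  refine ⟨hSne.mono (Set.subset_sUnion_of_mem ⟨hS, hSb⟩), ?_, fun T hT => ?_⟩
  · intro huniv
    obtain ⟨S', ⟨_, hS'b⟩, hiS'⟩ := huniv ▸ Set.mem_univ (σ i)
    simpa using (hS'b _ hiS').1
  · by_cases hTb : StrictlyBetween σ i k T
    · exact Or.inl (Set.subset_sUnion_of_mem ⟨hT, hTb⟩)
    right
    rw [Set.disjoint_sUnion_right]
    rintro S' ⟨hS', hS'b⟩
    rw [Set.disjoint_left]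
    intro v hvT hvS'
    obtain ⟨w, hwT, hw⟩ : ∃ w ∈ T, ¬(i < σ.symm w ∧ σ.symm w < k) := by
      simpa [StrictlyBetween] using hTb
    have hiT : σ i ∈ T ∧ σ k ∈ T := by
      rcases (hσ.1 T hT).mem_or_mem_of_strictlyBetween hvT (hS'b v hvS') hwT hw with h | h
      · exact ⟨h, (hik T hT).mp h⟩
      · exact ⟨(hik T hT).mpr h, h⟩
    exact hσ.not_strictlyBetween_of_subset hS' hT
      (hS'b.subset_of_isIntervalIn (hσ.1 T hT) hiT.1 hiT.2) hiT.1 hiT.2 hS'b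

theorem ContiguousOrd.equivElem_of_le_of_le (hσ : ContiguousOrd σ 𝒮) (hsf : SeparatorFree 𝒮)
    {i j k : Fin n} (hij : i ≤ j) (hjk : j ≤ k) (hik : EquivElem 𝒮 (σ i) (σ k)) :
    EquivElem 𝒮 (σ j) (σ i) := by
  intro S hS
  refine ⟨fun hj => ?_, fun hi => hσ.1 S hS i j k hij hjk hi ((hik S hS).mp hi)⟩
  by_contra hi
  have hk : σ k ∉ S := fun hk => hi ((hik S hS).mpr hk)
  exact hsf ⟨_, hσ.isSeparator_sUnion_strictlyBetween hik hS
    ((hσ.1 S hS).strictlyBetween hij hjk hj hi hk) ⟨_, hj⟩⟩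

end Ordering

theorem equiv_class_consecutive_in_contiguous_general
    {V : Type*} {n : ℕ}
    (𝒮 : Set (Set V)) (hsf : SeparatorFree 𝒮)
    (σ : Fin n ≃ V) (hσ : ContiguousOrd σ 𝒮)
    (X : Set V)
    (hXeq : ∀ u ∈ X, ∀ v ∈ X, EquivElem 𝒮 u v)
    (hXmax : ∀ Y : Set V, X ⊆ Y → (∀ u ∈ Y, ∀ v ∈ Y, EquivElem 𝒮 u v) → Y = X) :
    IsIntervalIn σ X := by
  intro i j k hij hjk hi hk
  exact mem_of_equivElem_of_maximal hXeq hXmax hi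
    (hσ.equivElem_of_le_of_le hsf hij hjk (hXeq _ hi _ hk))

/-- For a separator-free family, the elements of a maximal set of pairwise equivalent
elements appear consecutively in any contiguous ordering. -/
theorem equiv_class_consecutive_in_contiguous
    {V : Type*} [Fintype V] {n : ℕ} (hn : n = Fintype.card V)
    (𝒮 : Set (Set V)) (hne : ∅ ∉ 𝒮) (hsf : SeparatorFree 𝒮)
    (σ : Fin n ≃ V) (hσ : ContiguousOrd σ 𝒮)
    (X : Set V) (hXne : X.Nonempty)
    (hXeq : ∀ u ∈ X, ∀ v ∈ X, EquivElem 𝒮 u v)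
    (hXmax : ∀ Y : Set V, X ⊆ Y → (∀ u ∈ Y, ∀ v ∈ Y, EquivElem 𝒮 u v) → Y = X) :
    IsIntervalIn σ X :=
  equiv_class_consecutive_in_contiguous_general 𝒮 hsf σ hσ X hXeq hXmax
end

section
/- Let 𝒮 ⊆ 2^V be simple and separator-free. Form 𝒮' from 𝒮 by adding, for each minimal A ∈ 𝒮 and each maximal B ∈ 𝒮 with A ⊊ B and B\A ∉ 𝒮, the set B\A. Then every consecutive ordering of V to 𝒮' is a contiguous ordering of V to 𝒮. -/
/-- No two distinct elements are equivalent for `𝒮`. -/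
def SimpleFam {V : Type*} (𝒮 : Set (Set V)) : Prop :=
  ∀ u v : V, (∀ S ∈ 𝒮, (u ∈ S ↔ v ∈ S)) → u = v

/-- The augmented family `𝒮'`: `𝒮` together with `B \ A` for each minimal `A` and
maximal `B` of `𝒮` with `A ⊊ B` and `B \ A ∉ 𝒮`. -/
def AugFam {V : Type*} (𝒮 : Set (Set V)) : Set (Set V) :=
  𝒮 ∪ {T | ∃ A B : Set V, MinimalIn 𝒮 A ∧ MaximalIn 𝒮 B ∧ A ⊂ B ∧ B \ A ∉ 𝒮 ∧ T = B \ A}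

section

variable {V : Type*} {𝒮 : Set (Set V)} {A B S : Set V}

theorem Minimal.minimalIn (h : Minimal (· ∈ 𝒮) A) : MinimalIn 𝒮 A :=
  ⟨h.prop, fun _ hA' hle => h.eq_of_le hA' hle⟩

theorem Maximal.maximalIn (h : Maximal (· ∈ 𝒮) B) : MaximalIn 𝒮 B :=
  ⟨h.prop, fun _ hB' hle => h.eq_of_ge hB' hle⟩

theorem exists_minimalIn_subset [Finite V] (hS : S ∈ 𝒮) : ∃ A ⊆ S, MinimalIn 𝒮 A := by
  obtain ⟨A, hAS, hA⟩ := Finite.exists_le_minimal (p := (· ∈ 𝒮)) hS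
  exact ⟨A, hAS, hA.minimalIn⟩

theorem exists_maximalIn_superset [Finite V] (hS : S ∈ 𝒮) : ∃ B, S ⊆ B ∧ MaximalIn 𝒮 B := by
  obtain ⟨B, hSB, hB⟩ := Finite.exists_le_maximal (p := (· ∈ 𝒮)) hS
  exact ⟨B, hSB, hB.maximalIn⟩

theorem diff_mem_augFam (hA : MinimalIn 𝒮 A) (hB : MaximalIn 𝒮 B) (hAB : A ⊂ B) :
    B \ A ∈ AugFam 𝒮 := by
  by_cases h : B \ A ∈ 𝒮
  · exact Or.inl h
  · exact Or.inr ⟨A, B, hA, hB, hAB, h, rfl⟩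

theorem IsIntervalIn.mem_or_mem_of_diff {n : ℕ} {σ : Fin n ≃ V} (h : IsIntervalIn σ (B \ A))
    {i j k : Fin n} (hik : i ≤ k) (hkj : k ≤ j) (hk : σ k ∈ A) (hi : σ i ∈ B) (hj : σ j ∈ B) :
    σ i ∈ A ∨ σ j ∈ A := by
  by_contra! hij
  exact (h i k j hik hkj ⟨hi, hij.1⟩ ⟨hj, hij.2⟩).2 hk

end

theorem consecutive_of_aug_is_contiguous_general
    {V : Type*} {n : ℕ}
    (𝒮 : Set (Set V)) (hne : ∅ ∉ 𝒮)
    (σ : Fin n ≃ V) (hσ : ConsecutiveOrd σ (AugFam 𝒮)) :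
    ContiguousOrd σ 𝒮 := by
  have : Finite V := .of_equiv _ σ
  refine ⟨fun S hS => hσ S (Or.inl hS), fun S hS S' hS' hSS' i j hi hj hbound => ?_⟩
  obtain ⟨A, hAS, hA⟩ := exists_minimalIn_subset hS
  obtain ⟨B, hS'B, hB⟩ := exists_maximalIn_superset hS'
  obtain ⟨a, ha⟩ := Set.nonempty_iff_ne_empty.2 (ne_of_mem_of_not_mem hA.1 hne)
  obtain ⟨hia, haj⟩ := hbound (σ.symm a) (by simpa using hSS' (hAS ha))
  rcases (hAS.trans hSS' |>.trans hS'B).eq_or_ssubset with rfl | hAB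
  · exact Or.inl (hAS (hS'B hi))
  · have hBA := hσ _ (diff_mem_augFam hA hB hAB)
    exact (hBA.mem_or_mem_of_diff hia haj (by simpa using ha) (hS'B hi) (hS'B hj)).imp
      (@hAS _) (@hAS _)

/-- Every consecutive ordering of `V` to `𝒮'` is a contiguous ordering of `V` to `𝒮`. -/
theorem consecutive_of_aug_is_contiguous
    {V : Type*} [Fintype V] {n : ℕ} (hn : n = Fintype.card V)
    (𝒮 : Set (Set V)) (hne : ∅ ∉ 𝒮)
    (hsimple : SimpleFam 𝒮) (hsf : SeparatorFree 𝒮)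
    (σ : Fin n ≃ V) (hσ : ConsecutiveOrd σ (AugFam 𝒮)) :
    ContiguousOrd σ 𝒮 :=
  consecutive_of_aug_is_contiguous_general 𝒮 hne σ hσ
end

section
/- The family 𝒞 of all cuts of a family 𝒮 ⊆ 2^V is laminar: any two cuts C, C' ∈ 𝒞 satisfy C ⊆ C', C' ⊆ C, or C ∩ C' = ∅; consequently |𝒞| ≤ 2|V|. -/
/-- `C` is a cut of `𝒮`: a member of `𝒮` with `2 ≤ |C| ≤ |V|-1` that intersects
no other member of `𝒮`. -/
def IsCutMember {V : Type*} [Fintype V] (𝒮 : Set (Set V)) (C : Set V) : Prop :=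
  C ∈ 𝒮 ∧ 2 ≤ C.ncard ∧ C.ncard ≤ Fintype.card V - 1 ∧
    ∀ S ∈ 𝒮, S ≠ C → ¬ Crosses S C

/-!
Two crossing cuts would contradict the definition of a cut, so the cuts form a laminar family.
For the bound, let `𝒞` be a laminar family of sets of size at least `2` inside a finite set `U`,
take an inclusion-minimal member `m` and two points `x ≠ y` of `m`. Every member meeting `m`
contains it, so a member contains `x` iff it contains `y`; hence deleting `y` is injective on `𝒞`,
and on `𝒞 \ {m}` it keeps all sizes at least `2`. Induction on `|U|` gives `|𝒞| ≤ |U|`.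
-/

section Laminar

open Set

variable {α : Type*}

def IsLaminar (𝒞 : Set (Set α)) : Prop :=
  ∀ C ∈ 𝒞, ∀ C' ∈ 𝒞, C ⊆ C' ∨ C' ⊆ C ∨ C ∩ C' = ∅

theorem not_crosses_iff {S C : Set α} : ¬Crosses S C ↔ S ⊆ C ∨ C ⊆ S ∨ S ∩ C = ∅ := by
  simp only [Crosses, ← sdiff_eq_empty, ← not_nonempty_iff_eq_empty]
  tauto

theorem isLaminar_setOf_isCutMember {V : Type*} [Fintype V] (𝒮 : Set (Set V)) :
    IsLaminar {C | IsCutMember 𝒮 C} := by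
  intro C hC C' hC'
  rcases eq_or_ne C C' with rfl | hne
  · exact Or.inl subset_rfl
  · exact not_crosses_iff.mp (hC'.2.2.2 C hC.1 hne)

namespace IsLaminar

variable {𝒞 𝒟 : Set (Set α)} {C m U : Set α} {x y : α}

theorem mono (h : IsLaminar 𝒞) (h𝒟 : 𝒟 ⊆ 𝒞) : IsLaminar 𝒟 :=
  fun C hC C' hC' => h C (h𝒟 hC) C' (h𝒟 hC')

theorem image_sdiff (h : IsLaminar 𝒞) (T : Set α) : IsLaminar ((· \ T) '' 𝒞) := by
  rintro _ ⟨C, hC, rfl⟩ _ ⟨C', hC', rfl⟩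
  rcases h C hC C' hC' with hsub | hsup | hdisj
  · exact Or.inl (sdiff_subset_sdiff_left hsub)
  · exact Or.inr (Or.inl (sdiff_subset_sdiff_left hsup))
  · refine Or.inr (Or.inr (subset_empty_iff.mp ?_))
    exact hdisj ▸ inter_subset_inter sdiff_subset sdiff_subset

theorem subset_of_minimal (h : IsLaminar 𝒞) (hm : Minimal (· ∈ 𝒞) m) (hC : C ∈ 𝒞)
    (hmeet : (C ∩ m).Nonempty) : m ⊆ C := by
  rcases h C hC m hm.prop with hCm | hmC | hdisj
  · exact hm.le_of_le hC hCm
  · exact hmC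
  · exact absurd hdisj hmeet.ne_empty

theorem mem_iff_mem_of_minimal (h : IsLaminar 𝒞) (hm : Minimal (· ∈ 𝒞) m) (hx : x ∈ m)
    (hy : y ∈ m) (hC : C ∈ 𝒞) : x ∈ C ↔ y ∈ C :=
  ⟨fun hxC => h.subset_of_minimal hm hC ⟨x, hxC, hx⟩ hy,
    fun hyC => h.subset_of_minimal hm hC ⟨y, hyC, hy⟩ hx⟩

theorem injOn_sdiff_singleton (h : IsLaminar 𝒞) (hm : Minimal (· ∈ 𝒞) m) (hx : x ∈ m)
    (hy : y ∈ m) (hxy : x ≠ y) : InjOn (· \ {y}) 𝒞 := by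
  intro C hC C' hC' hCC'
  have hmem : ∀ z ≠ y, z ∈ C ↔ z ∈ C' := fun z hzy => by
    simpa [hzy] using congrArg (z ∈ ·) hCC'
  ext z
  rcases eq_or_ne z y with rfl | hzy
  · rw [← h.mem_iff_mem_of_minimal hm hx hy hC, ← h.mem_iff_mem_of_minimal hm hx hy hC']
    exact hmem x hxy
  · exact hmem z hzy

theorem two_le_ncard_sdiff_singleton (h : IsLaminar 𝒞) (hm : Minimal (· ∈ 𝒞) m) (hy : y ∈ m)
    (hbig : ∀ C ∈ 𝒞, 2 ≤ C.ncard) (hC : C ∈ 𝒞) (hCm : C ≠ m) (hCfin : C.Finite) :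
    2 ≤ (C \ {y}).ncard := by
  by_cases hyC : y ∈ C
  · have hmC : m ⊂ C := (h.subset_of_minimal hm hC ⟨y, hyC, hy⟩).ssubset_of_ne hCm.symm
    have := ncard_lt_ncard hmC hCfin
    have := ncard_sdiff_singleton_add_one hyC hCfin
    have := hbig m hm.prop
    omega
  · rw [sdiff_singleton_eq_self hyC]
    exact hbig C hC

theorem ncard_le (h : IsLaminar 𝒞) (hU : U.Finite) (hsub : ∀ C ∈ 𝒞, C ⊆ U)
    (hbig : ∀ C ∈ 𝒞, 2 ≤ C.ncard) : 𝒞.ncard ≤ U.ncard := by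
  induction hn : U.ncard using Nat.strong_induction_on generalizing 𝒞 U with
  | _ n ih =>
  rcases 𝒞.eq_empty_or_nonempty with rfl | hne
  · simp
  have h𝒞fin : 𝒞.Finite := hU.finite_subsets.subset hsub
  obtain ⟨m, hm⟩ := h𝒞fin.exists_minimal hne
  obtain ⟨x, y, hx, hy, hxy⟩ :=
    (one_lt_ncard_iff (hU.subset (hsub m hm.prop))).mp (hbig m hm.prop)
  have hcard : ((· \ {y}) '' (𝒞 \ {m})).ncard + 1 = 𝒞.ncard := by
    rw [((h.injOn_sdiff_singleton hm hx hy hxy).mono sdiff_subset).ncard_image,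
      ncard_sdiff_singleton_add_one hm.prop h𝒞fin]
  have hUy := ncard_sdiff_singleton_add_one (hsub m hm.prop hy) hU
  have hle : ((· \ {y}) '' (𝒞 \ {m})).ncard ≤ (U \ {y}).ncard :=
    ih _ (by omega) ((h.mono sdiff_subset).image_sdiff {y}) hU.sdiff
    (by rintro _ ⟨C, hC, rfl⟩; exact sdiff_subset_sdiff_left (hsub C hC.1))
    (by
      rintro _ ⟨C, ⟨hC, hCm⟩, rfl⟩
      exact h.two_le_ncard_sdiff_singleton hm hy hbig hC hCm (hU.subset (hsub C hC)))
    rfl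
  omega

end IsLaminar

end Laminar

/-- The family of all cuts of `𝒮` is laminar, and hence has at most `2|V|` members. -/
theorem cuts_laminar_and_card_le
    {V : Type*} [Fintype V] (𝒮 : Set (Set V)) :
    (∀ C C', IsCutMember 𝒮 C → IsCutMember 𝒮 C' →
      C ⊆ C' ∨ C' ⊆ C ∨ C ∩ C' = ∅) ∧
    {C : Set V | IsCutMember 𝒮 C}.ncard ≤ 2 * Fintype.card V := by
  have hlam := isLaminar_setOf_isCutMember 𝒮
  refine ⟨fun C C' hC hC' => hlam C hC C' hC', ?_⟩
  have hle := hlam.ncard_le Set.finite_univ (fun C _ => Set.subset_univ C) (fun C hC => hC.2.1)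
  rw [Set.ncard_univ, Nat.card_eq_fintype_card] at hle
  omega
end

section
/- Let G = (V, E) be a graph, σ = v_1,…,v_n an ordering of V, and suppose there exists a pairwise compatibility representation of G on the star T_V with center v* and leaves v_1,…,v_n, with leaf-edge weights w_1 ≤ w_2 ≤ ⋯ ≤ w_n and bounds d_min ≤ d_max (so v_i v_j ∈ E iff d_min ≤ w_i + w_j ≤ d_max). Then σ is gap-free: no pair {v_i, v_j} with i < j, v_i v_j ∉ E, satisfies any of the conditions (g1), (g2), (g3). -/
/-- Gap condition (g1) for the index pair `(i,j)` under ordering `σ`. -/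
def GapG1 {V : Type*} {n : ℕ} (G : SimpleGraph V) (σ : Fin n ≃ V) (i j : Fin n) : Prop :=
  (∃ j' j'' : Fin n, j' < j ∧ j < j'' ∧ G.Adj (σ i) (σ j') ∧ G.Adj (σ i) (σ j'')) ∨
  (∃ i' i'' : Fin n, i' < i ∧ i < i'' ∧ G.Adj (σ i') (σ j) ∧ G.Adj (σ i'') (σ j))

/-- Gap condition (g2). -/
def GapG2 {V : Type*} {n : ℕ} (G : SimpleGraph V) (σ : Fin n ≃ V) (i j : Fin n) : Prop :=
  ∃ i' j' : Fin n, j' < i ∧ j < i' ∧ G.Adj (σ i) (σ i') ∧ G.Adj (σ j') (σ j)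

/-- Gap condition (g3). -/
def GapG3 {V : Type*} {n : ℕ} (G : SimpleGraph V) (σ : Fin n ≃ V) (i j : Fin n) : Prop :=
  ∃ i' j' : Fin n, i' < j ∧ i < j' ∧ G.Adj (σ i) (σ i') ∧ G.Adj (σ j) (σ j')

/-- `σ` is a gap-free ordering of the vertices of `G`: no non-adjacent pair
satisfies any of (g1), (g2), (g3). -/
def GapFree {V : Type*} {n : ℕ} (G : SimpleGraph V) (σ : Fin n ≃ V) : Prop :=
  ∀ i j : Fin n, i < j → ¬ G.Adj (σ i) (σ j) →
    ¬ (GapG1 G σ i j ∨ GapG2 G σ i j ∨ GapG3 G σ i j)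

/-! Under a star representation, adjacency of `σ i, σ j` depends only on whether `w i + w j`
lies in `[dmin, dmax]`, an interval. Each gap condition, by monotonicity of `w`, places
`w i + w j` between the weight sums of two edges, hence inside the interval, so `{i, j}` is an
edge after all. -/

section

variable {V : Type*} {n : ℕ} {G : SimpleGraph V} {σ : Fin n ≃ V} {w : Fin n → ℝ}
  {dmin dmax : ℝ} {i j : Fin n}

def IsSandwiched (G : SimpleGraph V) (σ : Fin n ≃ V) (w : Fin n → ℝ) (i j : Fin n) : Prop :=
  ∃ a b c d : Fin n, G.Adj (σ a) (σ b) ∧ G.Adj (σ c) (σ d) ∧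
    w a + w b ≤ w i + w j ∧ w i + w j ≤ w c + w d

theorem GapG1.isSandwiched (hw : Monotone w) (h : GapG1 G σ i j) : IsSandwiched G σ w i j := by
  rcases h with ⟨j', j'', hj', hj'', hadj', hadj''⟩ | ⟨i', i'', hi', hi'', hadj', hadj''⟩
  · exact ⟨i, j', i, j'', hadj', hadj'', by linarith [hw hj'.le], by linarith [hw hj''.le]⟩
  · exact ⟨i', j, i'', j, hadj', hadj'', by linarith [hw hi'.le], by linarith [hw hi''.le]⟩

theorem GapG2.isSandwiched (hw : Monotone w) (h : GapG2 G σ i j) : IsSandwiched G σ w i j := by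
  obtain ⟨i', j', hj', hi', hadj_i, hadj_j⟩ := h
  exact ⟨j', j, i, i', hadj_j, hadj_i, by linarith [hw hj'.le], by linarith [hw hi'.le]⟩

theorem GapG3.isSandwiched (hw : Monotone w) (h : GapG3 G σ i j) : IsSandwiched G σ w i j := by
  obtain ⟨i', j', hi', hj', hadj_i, hadj_j⟩ := h
  exact ⟨i, i', j, j', hadj_i, hadj_j, by linarith [hw hi'.le], by linarith [hw hj'.le]⟩

section StarRepresentation

variable (hrep : ∀ i j : Fin n, i ≠ j →
  (G.Adj (σ i) (σ j) ↔ (dmin ≤ w i + w j ∧ w i + w j ≤ dmax)))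
include hrep

theorem weight_sum_mem_Icc_of_adj (h : G.Adj (σ i) (σ j)) : w i + w j ∈ Set.Icc dmin dmax :=
  (hrep i j fun hij ↦ h.ne (congrArg σ hij)).mp h

theorem adj_of_isSandwiched (hij : i ≠ j) (h : IsSandwiched G σ w i j) : G.Adj (σ i) (σ j) := by
  obtain ⟨a, b, c, d, hab, hcd, hlow, hhigh⟩ := h
  have hab_mem := weight_sum_mem_Icc_of_adj hrep hab
  have hcd_mem := weight_sum_mem_Icc_of_adj hrep hcd
  exact (hrep i j hij).mpr ⟨hab_mem.1.trans hlow, hhigh.trans hcd_mem.2⟩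

end StarRepresentation

end

theorem star_representation_implies_gapFree_general
    {V : Type*} {n : ℕ} (G : SimpleGraph V) (σ : Fin n ≃ V)
    (w : Fin n → ℝ) (hw : Monotone w)
    (dmin dmax : ℝ)
    (hrep : ∀ i j : Fin n, i ≠ j →
      (G.Adj (σ i) (σ j) ↔ (dmin ≤ w i + w j ∧ w i + w j ≤ dmax))) :
    GapFree G σ := by
  intro i j hij hnadj hgap
  apply hnadj (adj_of_isSandwiched hrep hij.ne _)
  rcases hgap with h | h | h
  exacts [h.isSandwiched hw, h.isSandwiched hw, h.isSandwiched hw]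

/-- If `G` has a pairwise compatibility representation on a star with sorted leaf-edge
weights `w₁ ≤ ⋯ ≤ wₙ` (so `vᵢvⱼ ∈ E ↔ d_min ≤ wᵢ + wⱼ ≤ d_max`), then the
corresponding ordering `σ` is gap-free. -/
theorem star_representation_implies_gapFree
    {V : Type*} {n : ℕ} (G : SimpleGraph V) (σ : Fin n ≃ V)
    (w : Fin n → ℝ) (hw : Monotone w)
    (dmin dmax : ℝ) (hd : dmin ≤ dmax)
    (hrep : ∀ i j : Fin n, i ≠ j →
      (G.Adj (σ i) (σ j) ↔ (dmin ≤ w i + w j ∧ w i + w j ≤ dmax))) :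
    GapFree G σ :=
  star_representation_implies_gapFree_general G σ w hw dmin dmax hrep
end

section
/- Let G = (V,E) be a graph with a gap-free ordering σ = v_1,…,v_n and suppose two edges v_i v_j and v_{i'} v_{j'} (with i < j, i' < j') cross, i.e., i < i' < j < j' or i' < i < j' < j. Then the two edges belong to the same connected component of G. -/
namespace GapFree

variable {V : Type*} {n : ℕ} {G : SimpleGraph V} {σ : Fin n ≃ V} {i j i' j' : Fin n}

theorem adj_of_gapG2 (hgf : GapFree G σ) (hij : i < j) (hg : GapG2 G σ i j) :
    G.Adj (σ i) (σ j) :=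
  by_contra fun hn => hgf i j hij hn (Or.inr (Or.inl hg))

theorem adj_of_crossing (hgf : GapFree G σ) (h₁ : i < i') (h₂ : i' < j) (h₃ : j < j')
    (he : G.Adj (σ i) (σ j)) (he' : G.Adj (σ i') (σ j')) : G.Adj (σ i') (σ j) :=
  hgf.adj_of_gapG2 h₂ ⟨j', i, h₁, h₃, he', he⟩

end GapFree

theorem crossing_edges_same_component_general
    {V : Type*} {n : ℕ} (G : SimpleGraph V) (σ : Fin n ≃ V)
    (hgf : GapFree G σ)
    (i j i' j' : Fin n)
    (hcross : (i < i' ∧ i' < j ∧ j < j') ∨ (i' < i ∧ i < j' ∧ j' < j))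
    (he : G.Adj (σ i) (σ j)) (he' : G.Adj (σ i') (σ j')) :
    G.Reachable (σ i) (σ i') := by
  rcases hcross with ⟨h₁, h₂, h₃⟩ | ⟨h₁, h₂, h₃⟩
  · exact he.reachable.trans (hgf.adj_of_crossing h₁ h₂ h₃ he he').symm.reachable
  · exact (hgf.adj_of_crossing h₁ h₂ h₃ he' he).reachable.trans he'.symm.reachable

/-- In a gap-free ordering, two crossing edges belong to the same connected
component of `G` (all four endpoints are mutually reachable). -/
theorem crossing_edges_same_component
    {V : Type*} {n : ℕ} (G : SimpleGraph V) (σ : Fin n ≃ V)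
    (hgf : GapFree G σ)
    (i j i' j' : Fin n) (hij : i < j) (hij' : i' < j')
    (hcross : (i < i' ∧ i' < j ∧ j < j') ∨ (i' < i ∧ i < j' ∧ j' < j))
    (he : G.Adj (σ i) (σ j)) (he' : G.Adj (σ i') (σ j')) :
    G.Reachable (σ i) (σ i') :=
  crossing_edges_same_component_general G σ hgf i j i' j' hcross he he'
end

section
/- Let G = (V,E) be a graph, σ = v_1,…,v_n an ordering of V, and c a coloring of the pairs (i,j), i<j, with colors {red, green, blue} that is proper to (G, σ): green pairs are exactly the edges of G, for every i the green pairs containing i form an interval of indices, red pairs (i,j) have j less than all green partners of i, blue pairs (i,j) have i greater than all green partners of j, and the order conditions of a proper coloring hold. Define i_red as the largest i with (i, i+1) red (or 0 if no red pair exists) and i_blue as the smallest j with (j−1, j) blue (or n+1 if no blue pair exists). Then i_red + 1 ≤ i_blue − 1; moreover (i,j) is red for all i < j ≤ i_red, (i,j) is blue for all i_blue ≤ i < j, and (i,j) is green for all i_red < i < j < i_blue. -/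
inductive PCGColor : Type
  | red : PCGColor
  | green : PCGColor
  | blue : PCGColor
  deriving DecidableEq

/-!
A red pair `(i, j)` makes `(i, i + 1)` red by downward closure, so `i ≤ i_red`; dually a blue
pair `(i, j)` makes `(j - 1, j)` blue, so `i_blue ≤ j`. A pair strictly between the two indices
is therefore neither red nor blue. The red and blue blocks are the downward closure of
`(i_red, i_red + 1)` and the upward closure of `(i_blue - 1, i_blue)`, and these two pairs cannot
be comparable, since that would make one pair both red and blue.
-/

def RedDownwardClosed (n : ℕ) (c : ℕ → ℕ → PCGColor) : Prop :=
  ∀ i j i' j', 1 ≤ i' → i' < j' → i' ≤ i → j' ≤ j → i < j → j ≤ n →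
    c i j = PCGColor.red → c i' j' = PCGColor.red

def BlueUpwardClosed (n : ℕ) (c : ℕ → ℕ → PCGColor) : Prop :=
  ∀ i j i' j', 1 ≤ i → i < j → i ≤ i' → j ≤ j' → i' < j' → j' ≤ n →
    c i j = PCGColor.blue → c i' j' = PCGColor.blue

section

variable {n : ℕ} {c : ℕ → ℕ → PCGColor} {ir ib : ℕ}

theorem le_red_index_of_red (Hred : RedDownwardClosed n c)
    (hir1 : ∀ i, 1 ≤ i → i < n → c i (i + 1) = PCGColor.red → i ≤ ir)
    {i j : ℕ} (hi : 1 ≤ i) (hij : i < j) (hjn : j ≤ n) (h : c i j = PCGColor.red) : i ≤ ir :=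
  hir1 i hi (by omega) (Hred i j i (i + 1) hi (by omega) le_rfl hij hij hjn h)

theorem blue_index_le_of_blue (Hblue : BlueUpwardClosed n c)
    (hib1 : ∀ j, 2 ≤ j → j ≤ n → c (j - 1) j = PCGColor.blue → ib ≤ j)
    {i j : ℕ} (hi : 1 ≤ i) (hij : i < j) (hjn : j ≤ n) (h : c i j = PCGColor.blue) : ib ≤ j :=
  hib1 j (by omega) hjn (Hblue i j (j - 1) j hi hij (by omega) le_rfl (by omega) hjn h)

theorem red_of_le_red_index (Hred : RedDownwardClosed n c)
    (hir2 : ir = 0 ∨ (1 ≤ ir ∧ ir < n ∧ c ir (ir + 1) = PCGColor.red))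
    {i j : ℕ} (hi : 1 ≤ i) (hij : i < j) (hj : j ≤ ir) : c i j = PCGColor.red := by
  obtain rfl | ⟨-, hirn, hred⟩ := hir2
  · omega
  · exact Hred ir (ir + 1) i j hi hij (by omega) (by omega) (by omega) (by omega) hred

theorem blue_of_blue_index_le (Hblue : BlueUpwardClosed n c)
    (hib2 : ib = n + 1 ∨ (2 ≤ ib ∧ ib ≤ n ∧ c (ib - 1) ib = PCGColor.blue))
    {i j : ℕ} (hi : ib ≤ i) (hij : i < j) (hjn : j ≤ n) : c i j = PCGColor.blue := by
  obtain rfl | ⟨hib, -, hblue⟩ := hib2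
  · omega
  · exact Hblue (ib - 1) ib i j (by omega) (by omega) (by omega) (by omega) hij hjn hblue

theorem green_of_red_index_lt_of_lt_blue_index (Hred : RedDownwardClosed n c)
    (Hblue : BlueUpwardClosed n c)
    (hir1 : ∀ i, 1 ≤ i → i < n → c i (i + 1) = PCGColor.red → i ≤ ir)
    (hib1 : ∀ j, 2 ≤ j → j ≤ n → c (j - 1) j = PCGColor.blue → ib ≤ j)
    (hibn : ib ≤ n + 1) {i j : ℕ} (hi : ir < i) (hij : i < j) (hj : j < ib) :
    c i j = PCGColor.green := by
  have hjn : j ≤ n := by omega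
  cases hc : c i j with
  | red => exact absurd (le_red_index_of_red Hred hir1 (by omega) hij hjn hc) (by omega)
  | green => rfl
  | blue => exact absurd (blue_index_le_of_blue Hblue hib1 (by omega) hij hjn hc) (by omega)

theorem red_index_add_two_le_blue_index (hn : 1 ≤ n) (Hred : RedDownwardClosed n c)
    (hir2 : ir = 0 ∨ (1 ≤ ir ∧ ir < n ∧ c ir (ir + 1) = PCGColor.red))
    (hib2 : ib = n + 1 ∨ (2 ≤ ib ∧ ib ≤ n ∧ c (ib - 1) ib = PCGColor.blue)) :
    ir + 2 ≤ ib := by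
  obtain rfl | ⟨hir, hirn, hred⟩ := hir2
  · obtain rfl | ⟨hib, -, -⟩ := hib2 <;> omega
  obtain rfl | ⟨hib, hibn, hblue⟩ := hib2
  · omega
  by_contra! hlt
  have : c (ib - 1) ib = PCGColor.red :=
    Hred ir (ir + 1) (ib - 1) ib (by omega) (by omega) (by omega) (by omega) (by omega)
      (by omega) hred
  simp [hblue] at this

end

/-- Structure of a proper coloring of the pairs `(i,j)`, `1 ≤ i < j ≤ n`:
red pairs are downward closed, blue pairs upward closed, `i_red` is the largest `i`
with `(i,i+1)` red (`0` if none), `i_blue` is the smallest `j` with `(j-1,j)` blue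
(`n+1` if none). Then `i_red + 1 ≤ i_blue - 1`, pairs `(i,j)` with `i < j ≤ i_red`
are red, pairs with `i_blue ≤ i < j` are blue, and pairs with
`i_red < i < j < i_blue` are green. -/
theorem proper_coloring_trichotomy
    (n : ℕ) (hn : 2 ≤ n) (c : ℕ → ℕ → PCGColor) (ir ib : ℕ)
    (Hred : ∀ i j i' j', 1 ≤ i' → i' < j' → i' ≤ i → j' ≤ j → i < j → j ≤ n →
      c i j = PCGColor.red → c i' j' = PCGColor.red)
    (Hblue : ∀ i j i' j', 1 ≤ i → i < j → i ≤ i' → j ≤ j' → i' < j' → j' ≤ n →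
      c i j = PCGColor.blue → c i' j' = PCGColor.blue)
    (hir1 : ∀ i, 1 ≤ i → i < n → c i (i + 1) = PCGColor.red → i ≤ ir)
    (hir2 : ir = 0 ∨ (1 ≤ ir ∧ ir < n ∧ c ir (ir + 1) = PCGColor.red))
    (hib1 : ∀ j, 2 ≤ j → j ≤ n → c (j - 1) j = PCGColor.blue → ib ≤ j)
    (hib2 : ib = n + 1 ∨ (2 ≤ ib ∧ ib ≤ n ∧ c (ib - 1) ib = PCGColor.blue)) :
    ir + 1 ≤ ib - 1 ∧
    (∀ i j, 1 ≤ i → i < j → j ≤ ir → c i j = PCGColor.red) ∧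
    (∀ i j, ib ≤ i → i < j → j ≤ n → c i j = PCGColor.blue) ∧
    (∀ i j, ir < i → i < j → j < ib → c i j = PCGColor.green) := by
  have hgap : ir + 2 ≤ ib := red_index_add_two_le_blue_index (by omega) Hred hir2 hib2
  have hibn : ib ≤ n + 1 := by obtain h | ⟨-, h, -⟩ := hib2 <;> omega
  exact ⟨by omega,
    fun _ _ hi hij hj => red_of_le_red_index Hred hir2 hi hij hj,
    fun _ _ hi hij hjn => blue_of_blue_index_le Hblue hib2 hi hij hjn,
    fun _ _ hi hij hj =>
      green_of_red_index_lt_of_lt_blue_index Hred Hblue hir1 hib1 hibn hi hij hj⟩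
end

section
/- Let G = (V_1, V_2, E) be a connected bipartite graph with at least one edge, and suppose G has a gap-free ordering of V = V_1 ∪ V_2 of the form v_1,…,v_k, v_{k+1},…,v_n with V_1 = {v_1,…,v_k} and V_2 = {v_{k+1},…,v_n}. Then v_1,…,v_k is a contiguous ordering of V_1 to the family 𝒮_1 = { N_G(v) : v ∈ V_2 }. -/
/-!
In a gap-free ordering with `V₁` placed before `V₂`, let `w ∈ V₂` be adjacent to `p < q < r`
in `V₁`. Then `q < w`, so the non-edge `{q, w}` would be a (g1) gap; hence neighbourhoods are
intervals. For nested neighbourhoods `N(u) ⊆ N(v)` with `N(v) = [p, r]`, pick a neighbour `m`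
of `u` (it exists by connectivity) strictly inside `(p, r)`: if `u < v`, the non-edge `{r, u}`
is a (g2) gap witnessed by the edges `r v` and `m u`; if `v < u`, the non-edge `{p, u}` is a
(g3) gap witnessed by the edges `p v` and `u m`.
-/

namespace GapFree

variable {V : Type*} {n : ℕ} {G : SimpleGraph V} {σ : Fin n ≃ V}

theorem adj_of_gap (hgf : GapFree G σ) {i j : Fin n} (hij : i < j)
    (hgap : GapG1 G σ i j ∨ GapG2 G σ i j ∨ GapG3 G σ i j) : G.Adj (σ i) (σ j) := by
  by_contra hnadj
  exact hgf i j hij hnadj hgap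

theorem adj_of_le_of_le (hgf : GapFree G σ) {j p q r : Fin n} (hpq : p ≤ q) (hqr : q ≤ r)
    (hqj : q < j) (hjp : G.Adj (σ j) (σ p)) (hjr : G.Adj (σ j) (σ r)) :
    G.Adj (σ j) (σ q) := by
  rcases hpq.eq_or_lt with rfl | hpq
  · exact hjp
  rcases hqr.eq_or_lt with rfl | hqr
  · exact hjr
  exact (hgf.adj_of_gap hqj (.inl (.inr ⟨p, r, hpq, hqr, hjp.symm, hjr.symm⟩))).symm

theorem adj_left_or_adj_right (hgf : GapFree G σ) {u v p m r : Fin n} (hpu : p < u)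
    (hru : r < u) (hpm : p ≤ m) (hmr : m ≤ r) (hvp : G.Adj (σ v) (σ p))
    (hvr : G.Adj (σ v) (σ r)) (hum : G.Adj (σ u) (σ m)) :
    G.Adj (σ u) (σ p) ∨ G.Adj (σ u) (σ r) := by
  rcases hpm.eq_or_lt with rfl | hpm
  · exact .inl hum
  rcases hmr.eq_or_lt with rfl | hmr
  · exact .inr hum
  rcases lt_trichotomy u v with huv | rfl | hvu
  · exact .inr (hgf.adj_of_gap hru (.inr (.inl ⟨v, m, hmr, huv, hvr.symm, hum.symm⟩))).symm
  · exact .inl hvp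
  · exact .inl (hgf.adj_of_gap hpu (.inr (.inr ⟨v, m, hvu, hpm, hvp.symm, hum⟩))).symm

end GapFree

theorem bipartite_gapFree_gives_contiguous_general
    {V : Type*} {n : ℕ} (G : SimpleGraph V) (σ : Fin n ≃ V) (k : ℕ)
    (hbip : ∀ i j : Fin n, G.Adj (σ i) (σ j) → ((i : ℕ) < k ↔ ¬ (j : ℕ) < k))
    (hconn : G.Connected) (hE : ∃ u v : V, G.Adj u v)
    (hgf : GapFree G σ) :
    (∀ j : Fin n, k ≤ (j : ℕ) →
      ∀ p q r : Fin n, p ≤ q → q ≤ r → (r : ℕ) < k →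
        G.Adj (σ j) (σ p) → G.Adj (σ j) (σ r) → G.Adj (σ j) (σ q)) ∧
    (∀ ju jv : Fin n, k ≤ (ju : ℕ) → k ≤ (jv : ℕ) →
      (∀ x : V, G.Adj (σ ju) x → G.Adj (σ jv) x) →
      ∀ p r : Fin n, G.Adj (σ jv) (σ p) → G.Adj (σ jv) (σ r) →
        (∀ q : Fin n, G.Adj (σ jv) (σ q) → p ≤ q ∧ q ≤ r) →
        (G.Adj (σ ju) (σ p) ∨ G.Adj (σ ju) (σ r))) := by
  have lt_k_of_adj {w x : Fin n} (hw : k ≤ (w : ℕ)) (hwx : G.Adj (σ w) (σ x)) : (x : ℕ) < k := by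
    by_contra hx
    exact (hbip w x hwx).2 hx |>.not_ge hw
  refine ⟨fun j hj p q r hpq hqr hrk hjp hjr ↦ ?_, fun u v hu hv hsub p r hvp hvr hpr ↦ ?_⟩
  · exact hgf.adj_of_le_of_le hpq hqr (Fin.lt_def.2 (by omega)) hjp hjr
  · obtain ⟨a, b, hab⟩ := hE
    have := hab.nontrivial
    obtain ⟨x, hux⟩ := hconn.preconnected.exists_adj_of_nontrivial (σ u)
    rw [← σ.apply_symm_apply x] at hux
    obtain ⟨hpm, hmr⟩ := hpr _ (hsub _ hux)
    have hpk := lt_k_of_adj hv hvp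
    have hrk := lt_k_of_adj hv hvr
    exact hgf.adj_left_or_adj_right (Fin.lt_def.2 (by omega)) (Fin.lt_def.2 (by omega))
      hpm hmr hvp hvr hux

/-- For a connected bipartite graph with parts `V₁ = {v₁,…,v_k}` and
`V₂ = {v_{k+1},…,v_n}` and a gap-free ordering of this form, the restriction
`v₁,…,v_k` is a contiguous ordering of `V₁` to `𝒮₁ = {N_G(v) : v ∈ V₂}`:
every neighborhood `N_G(v)`, `v ∈ V₂`, occupies consecutive positions among
`v₁,…,v_k`, and nested neighborhoods share a first or last element. -/
theorem bipartite_gapFree_gives_contiguous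
    {V : Type*} {n : ℕ} (G : SimpleGraph V) (σ : Fin n ≃ V) (k : ℕ) (hk : k ≤ n)
    (hbip : ∀ i j : Fin n, G.Adj (σ i) (σ j) → ((i : ℕ) < k ↔ ¬ (j : ℕ) < k))
    (hconn : G.Connected) (hE : ∃ u v : V, G.Adj u v)
    (hgf : GapFree G σ) :
    (∀ j : Fin n, k ≤ (j : ℕ) →
      ∀ p q r : Fin n, p ≤ q → q ≤ r → (r : ℕ) < k →
        G.Adj (σ j) (σ p) → G.Adj (σ j) (σ r) → G.Adj (σ j) (σ q)) ∧
    (∀ ju jv : Fin n, k ≤ (ju : ℕ) → k ≤ (jv : ℕ) →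
      (∀ x : V, G.Adj (σ ju) x → G.Adj (σ jv) x) →
      ∀ p r : Fin n, G.Adj (σ jv) (σ p) → G.Adj (σ jv) (σ r) →
        (∀ q : Fin n, G.Adj (σ jv) (σ q) → p ≤ q ∧ q ≤ r) →
        (G.Adj (σ ju) (σ p) ∨ G.Adj (σ ju) (σ r))) :=
  bipartite_gapFree_gives_contiguous_general G σ k hbip hconn hE hgf
end

section
/- Let G = (V,E) be a graph with a gap-free ordering σ = v_1,…,v_n, and let V* = {v_p, v_{p+1}, …, v_q} be an interval of vertices such that each vertex in V_1 = {v_1,…,v_{p-1}} has all its neighbors among V_1 ∪ V* and each vertex of V* is adjacent to every other vertex of V* (G[V*] is a clique). Then for any two vertices v_i, v_j ∈ V_1 with i < j and N_G(v_i) ∩ V* ≠ ∅ ≠ N_G(v_j) ∩ V*, it holds that N_G(v_i) ∩ V* ⊆ N_G(v_j) ∩ V*. (Neighborhoods into the clique are nested along the ordering.) -/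
theorem GapFree.adj_of_adj_of_adj {V : Type*} {n : ℕ} {G : SimpleGraph V} {σ : Fin n ≃ V}
    (hgf : GapFree G σ) {i j k l : Fin n} (hij : i < j) (hjl : j < l) (hjk : j < k)
    (hik : G.Adj (σ i) (σ k)) (hlk : G.Adj (σ l) (σ k)) : G.Adj (σ j) (σ k) := by
  by_contra hjk'
  exact hgf j k hjk hjk' (Or.inl (Or.inr ⟨i, l, hij, hjl, hik, hlk⟩))

theorem clique_neighborhoods_nested_general
    {V : Type*} {n : ℕ} (G : SimpleGraph V) (σ : Fin n ≃ V)
    (hgf : GapFree G σ) (p q : Fin n)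
    (hclique : ∀ k l : Fin n, p ≤ k → k ≤ q → p ≤ l → l ≤ q → k ≠ l →
      G.Adj (σ k) (σ l)) :
    ∀ i j : Fin n, i < j → j < p →
      (∃ k : Fin n, p ≤ k ∧ k ≤ q ∧ G.Adj (σ i) (σ k)) →
      (∃ k : Fin n, p ≤ k ∧ k ≤ q ∧ G.Adj (σ j) (σ k)) →
      ∀ k : Fin n, p ≤ k → k ≤ q → G.Adj (σ i) (σ k) → G.Adj (σ j) (σ k) := by
  intro i j hij hjp _ ⟨l, hpl, hlq, hjl⟩ k hpk hkq hik
  by_cases hlk : l = k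
  · exact hlk ▸ hjl
  exact hgf.adj_of_adj_of_adj hij (hjp.trans_le hpl) (hjp.trans_le hpk) hik
    (hclique l k hpl hlq hpk hkq hlk)

/-- Let `V* = {v_p,…,v_q}` induce a clique, and suppose every vertex of
`V₁ = {v₁,…,v_{p-1}}` has all neighbors in `V₁ ∪ V*`. In a gap-free ordering,
the neighborhoods into the clique are nested along the ordering:
for `i < j < p`, `N(vᵢ) ∩ V* ⊆ N(vⱼ) ∩ V*` (whenever both are nonempty). -/
theorem clique_neighborhoods_nested
    {V : Type*} {n : ℕ} (G : SimpleGraph V) (σ : Fin n ≃ V)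
    (hgf : GapFree G σ) (p q : Fin n) (hpq : p ≤ q)
    (hV1 : ∀ i j : Fin n, i < p → G.Adj (σ i) (σ j) → j ≤ q)
    (hclique : ∀ k l : Fin n, p ≤ k → k ≤ q → p ≤ l → l ≤ q → k ≠ l →
      G.Adj (σ k) (σ l)) :
    ∀ i j : Fin n, i < j → j < p →
      (∃ k : Fin n, p ≤ k ∧ k ≤ q ∧ G.Adj (σ i) (σ k)) →
      (∃ k : Fin n, p ≤ k ∧ k ≤ q ∧ G.Adj (σ j) (σ k)) →
      ∀ k : Fin n, p ≤ k → k ≤ q → G.Adj (σ i) (σ k) → G.Adj (σ j) (σ k) :=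
  clique_neighborhoods_nested_general G σ hgf p q hclique
end

section
/- Let G = (V,E) be connected and non-bipartite, let v*_1, v*_2 be adjacent vertices, and set V* = {v*_1, v*_2} ∪ (N_G(v*_1) ∩ N_G(v*_2)). Suppose G has a gap-free ordering σ = v_1,…,v_n with v*_1 = v_{i_red+1} and v*_2 = v_{i_blue−1} for a proper coloring c of σ, under which {v_i : i_red+1 ≤ i ≤ i_blue−1} induces a clique, v_{i_red+1} has no neighbor v_j with j ≥ i_blue, and v_{i_blue−1} has no neighbor v_j with j ≤ i_red. Then G[V*] is the unique maximal clique of G containing the edge v*_1 v*_2, and V* = {v_i : i_red+1 ≤ i ≤ i_blue−1}. -/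
/-! Every clique through `u` and `v` lies in `{u, v} ∪ (N(u) ∩ N(v))`. The interval
`v_{i₁}, …, v_{i₂}` is such a clique, and conversely a common neighbour of its endpoints can
lie neither after `i₂` (it would be a neighbour of `v_{i₁}`) nor before `i₁` (a neighbour of
`v_{i₂}`), so the two sets coincide. -/

namespace SimpleGraph

variable {V : Type*} {G : SimpleGraph V}

theorem IsClique.subset_insert_insert_inter_neighborSet {K : Set V} (hK : G.IsClique K)
    {u v : V} (hu : u ∈ K) (hv : v ∈ K) :
    K ⊆ {u, v} ∪ (G.neighborSet u ∩ G.neighborSet v) := by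
  intro w hw
  by_cases hwu : w = u
  · exact Or.inl (Or.inl hwu)
  by_cases hwv : w = v
  · exact Or.inl (Or.inr hwv)
  exact Or.inr ⟨hK hu hw (Ne.symm hwu), hK hv hw (Ne.symm hwv)⟩

variable (G) {ι : Type*} [LinearOrder ι] (σ : ι ≃ V) {i₁ i₂ : ι}

theorem isClique_image_Icc
    (hcl : ∀ k l, i₁ ≤ k → k ≤ i₂ → i₁ ≤ l → l ≤ i₂ → k ≠ l → G.Adj (σ k) (σ l)) :
    G.IsClique (σ '' Set.Icc i₁ i₂) := by
  rintro _ ⟨k, ⟨hk₁, hk₂⟩, rfl⟩ _ ⟨l, ⟨hl₁, hl₂⟩, rfl⟩ hne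
  exact hcl k l hk₁ hk₂ hl₁ hl₂ (ne_of_apply_ne σ hne)

theorem insert_insert_inter_neighborSet_subset_image_Icc (hle : i₁ ≤ i₂)
    (h₁ : ∀ j, i₂ < j → ¬ G.Adj (σ i₁) (σ j)) (h₂ : ∀ j, j < i₁ → ¬ G.Adj (σ i₂) (σ j)) :
    {σ i₁, σ i₂} ∪ (G.neighborSet (σ i₁) ∩ G.neighborSet (σ i₂)) ⊆ σ '' Set.Icc i₁ i₂ := by
  rintro w ((rfl | rfl) | ⟨hw₁, hw₂⟩)
  · exact ⟨i₁, ⟨le_rfl, hle⟩, rfl⟩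
  · exact ⟨i₂, ⟨hle, le_rfl⟩, rfl⟩
  · obtain ⟨j, rfl⟩ := σ.surjective w
    exact ⟨j, ⟨not_lt.mp fun h ↦ h₂ j h hw₂, not_lt.mp fun h ↦ h₁ j h hw₁⟩, rfl⟩

end SimpleGraph

theorem core_unique_maximal_clique_general
    {V : Type*} {n : ℕ}
    (G : SimpleGraph V) (σ : Fin n ≃ V)
    (i1 i2 : Fin n) (hlt : i1 < i2)
    (hcl : ∀ k l : Fin n, i1 ≤ k → k ≤ i2 → i1 ≤ l → l ≤ i2 → k ≠ l →
      G.Adj (σ k) (σ l))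
    (h1 : ∀ j : Fin n, i2 < j → ¬ G.Adj (σ i1) (σ j))
    (h2 : ∀ j : Fin n, j < i1 → ¬ G.Adj (σ i2) (σ j)) :
    G.IsClique ({σ i1, σ i2} ∪ (G.neighborSet (σ i1) ∩ G.neighborSet (σ i2))) ∧
    (∀ K : Set V, G.IsClique K → σ i1 ∈ K → σ i2 ∈ K →
      K ⊆ {σ i1, σ i2} ∪ (G.neighborSet (σ i1) ∩ G.neighborSet (σ i2))) ∧
    ({σ i1, σ i2} ∪ (G.neighborSet (σ i1) ∩ G.neighborSet (σ i2)) =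
      ⇑σ '' {k : Fin n | i1 ≤ k ∧ k ≤ i2}) := by
  have hIcc := G.isClique_image_Icc σ hcl
  have hset : {σ i1, σ i2} ∪ (G.neighborSet (σ i1) ∩ G.neighborSet (σ i2)) =
      σ '' Set.Icc i1 i2 :=
    (G.insert_insert_inter_neighborSet_subset_image_Icc σ hlt.le h1 h2).antisymm
      (hIcc.subset_insert_insert_inter_neighborSet ⟨i1, ⟨le_rfl, hlt.le⟩, rfl⟩
        ⟨i2, ⟨hlt.le, le_rfl⟩, rfl⟩)
  exact ⟨hset ▸ hIcc, fun K hK hu hv ↦ hK.subset_insert_insert_inter_neighborSet hu hv, hset⟩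

/-- In the situation of the core of a gap-free ordering of a connected non-bipartite
graph: `V* = {v*₁, v*₂} ∪ (N(v*₁) ∩ N(v*₂))` is the unique maximal clique containing
the edge `v*₁v*₂`, and it equals the interval `{v_{i_red+1},…,v_{i_blue−1}}`. -/
theorem core_unique_maximal_clique
    {V : Type*} [Fintype V] [DecidableEq V] {n : ℕ}
    (G : SimpleGraph V) (σ : Fin n ≃ V)
    (hconn : G.Connected)
    (hnonbip : ¬ ∃ f : V → Bool, ∀ u v : V, G.Adj u v → f u ≠ f v)
    (hgf : GapFree G σ)
    (i1 i2 : Fin n) (hlt : i1 < i2)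
    (hadj : G.Adj (σ i1) (σ i2))
    (hcl : ∀ k l : Fin n, i1 ≤ k → k ≤ i2 → i1 ≤ l → l ≤ i2 → k ≠ l →
      G.Adj (σ k) (σ l))
    (h1 : ∀ j : Fin n, i2 < j → ¬ G.Adj (σ i1) (σ j))
    (h2 : ∀ j : Fin n, j < i1 → ¬ G.Adj (σ i2) (σ j)) :
    G.IsClique ({σ i1, σ i2} ∪ (G.neighborSet (σ i1) ∩ G.neighborSet (σ i2))) ∧
    (∀ K : Set V, G.IsClique K → σ i1 ∈ K → σ i2 ∈ K →
      K ⊆ {σ i1, σ i2} ∪ (G.neighborSet (σ i1) ∩ G.neighborSet (σ i2))) ∧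
    ({σ i1, σ i2} ∪ (G.neighborSet (σ i1) ∩ G.neighborSet (σ i2)) =
      ⇑σ '' {k : Fin n | i1 ≤ k ∧ k ≤ i2}) :=
  core_unique_maximal_clique_general G σ i1 i2 hlt hcl h1 h2
end
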